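/- Let G be a position independent generalized Cops and Robbers game in which the Pursuer has a winning strategy. Then listing the vertices (p_P, q_E) of the round summary digraph R_G with q_E ≼ p_P so that the pairs in ≼_0 come first, followed by those in ≼_1 \ ≼_0, then those in ≼_2 \ ≼_1, and so on, yields a removable vertex ordering for R_G. -/

import Mathlib

open Classical

/-- A generalized Cops and Robbers game on Pursuer positions `PP` and Evader positions `PE`.
`F` is the set of final positions, `I` the set of allowed start positions, and
`AP`/`AE` give the (nonempty) sets of allowed moves of the Pursuer/Evader from a
non-final position (a move changes only that player's own coordinate). -/
structure GCR (PP PE : Type*) where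
  F : PP → PE → Prop
  I : PP → PE → Prop
  AP : PP → PE → Set PP
  AE : PP → PE → Set PE
  I_nonempty : ∃ p q, I p q
  AP_nonempty : ∀ p q, ¬ F p q → (AP p q).Nonempty
  AE_nonempty : ∀ p q, ¬ F p q → (AE p q).Nonempty

namespace GCR

variable {PP PE : Type*}

/-- The Pursuer's allowed start positions `I_P`. -/
def IP (G : GCR PP PE) (p : PP) : Prop := ∃ q, G.I p q

/-- The Evader's allowed start positions `I_E(p)` against the Pursuer start `p`. -/
def IE (G : GCR PP PE) (p : PP) (q : PE) : Prop := G.I p q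

/-- The sequence of relations `≼_i` from Evader positions to Pursuer positions:
`q ≼_0 p` iff `(p,q) ∈ F`; and for `i ≥ 1`, `q ≼_i p` iff `(p,q) ∈ F` or for every
`x ∈ A_E(p,q)` either `(p,x) ∈ F` or there is `w ∈ A_P(p,x)` with `x ≼_j w` for some `j < i`. -/
def rel (G : GCR PP PE) : ℕ → PE → PP → Prop
  | 0, q, p => G.F p q
  | (i+1), q, p => G.F p q ∨
      ∀ x ∈ G.AE p q, G.F p x ∨ ∃ w ∈ G.AP p x, ∃ j, ∃ _ : j < i + 1, G.rel j x w
  termination_by i _ _ => i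
  decreasing_by omega

/-- The stabilized relation `≼`. -/
def Rel (G : GCR PP PE) (q : PE) (p : PP) : Prop := ∃ i, G.rel i q p

/-- A strategy for the Pursuer: an initial position together with a move for every
finite history of positions (most recent first). -/
structure PStrat (G : GCR PP PE) where
  init : PP
  move : List (PP × PE) → PP

/-- A strategy for the Evader: an initial position (depending on the Pursuer's choice)
together with a move for every finite history of positions (most recent first). -/
structure EStrat (G : GCR PP PE) where
  init : PP → PE
  move : List (PP × PE) → PE

/-- A Pursuer strategy plays allowed moves at every non-final position. -/
def PStrat.MovesValid {G : GCR PP PE} (σ : PStrat G) : Prop :=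
  ∀ (h : List (PP × PE)) (c : PP × PE), ¬ G.F c.1 c.2 → σ.move (c :: h) ∈ G.AP c.1 c.2

/-- An Evader strategy plays allowed moves at every non-final position. -/
def EStrat.MovesValid {G : GCR PP PE} (τ : EStrat G) : Prop :=
  ∀ (h : List (PP × PE)) (c : PP × PE), ¬ G.F c.1 c.2 → τ.move (c :: h) ∈ G.AE c.1 c.2

/-- A valid Pursuer strategy: the initial position is an allowed start position,
and all moves are allowed. -/
def PStrat.Valid {G : GCR PP PE} (σ : PStrat G) : Prop :=
  G.IP σ.init ∧ σ.MovesValid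

/-- A valid Evader strategy: the initial position is an allowed response to any allowed
Pursuer start position, and all moves are allowed. -/
def EStrat.Valid {G : GCR PP PE} (τ : EStrat G) : Prop :=
  (∀ p, G.IP p → G.IE p (τ.init p)) ∧ τ.MovesValid

/-- The play of the game determined by strategies `σ` and `τ`: first both players choose
their start positions, then they move alternately with the Pursuer moving first.
Returns the current position after `n` single moves together with the history so far. -/
def play (G : GCR PP PE) (σ : PStrat G) (τ : EStrat G) : ℕ → (PP × PE) × List (PP × PE)
  | 0 => ((σ.init, τ.init σ.init), [(σ.init, τ.init σ.init)])
  | (n+1) =>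
      let s := play G σ τ n
      let nxt := if n % 2 = 0 then (σ.move s.2, s.1.2) else (s.1.1, τ.move s.2)
      (nxt, nxt :: s.2)

/-- The position after `n` single moves of the play determined by `σ` and `τ`. -/
def pos (G : GCR PP PE) (σ : PStrat G) (τ : EStrat G) (n : ℕ) : PP × PE :=
  (play G σ τ n).1

/-- Play from a given mid-game position `start`; `pFirst = true` means the Pursuer is
next to move. The players move alternately. Returns the current position after `n`
single moves together with the history so far. -/
def playFrom (G : GCR PP PE) (σ : PStrat G) (τ : EStrat G) (start : PP × PE)
    (pFirst : Bool) : ℕ → (PP × PE) × List (PP × PE)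
  | 0 => (start, [start])
  | (n+1) =>
      let s := playFrom G σ τ start pFirst n
      let nxt := if (decide (n % 2 = 0)) == pFirst
        then (σ.move s.2, s.1.2) else (s.1.1, τ.move s.2)
      (nxt, nxt :: s.2)

/-- The position after `n` single moves of the play from state `(start, pFirst)`. -/
def posFrom (G : GCR PP PE) (σ : PStrat G) (τ : EStrat G) (start : PP × PE)
    (pFirst : Bool) (n : ℕ) : PP × PE :=
  (playFrom G σ τ start pFirst n).1

/-- The Pursuer has a winning strategy: a valid strategy such that against every valid
Evader strategy the position eventually belongs to `F`. -/
def PursuerWins (G : GCR PP PE) : Prop :=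
  ∃ σ : PStrat G, σ.Valid ∧ ∀ τ : EStrat G, τ.Valid →
    ∃ n, G.F (pos G σ τ n).1 (pos G σ τ n).2

/-- The Evader has a winning strategy: a valid strategy such that against every valid
Pursuer strategy the position never belongs to `F`. -/
def EvaderWins (G : GCR PP PE) : Prop :=
  ∃ τ : EStrat G, τ.Valid ∧ ∀ σ : PStrat G, σ.Valid →
    ∀ n, ¬ G.F (pos G σ τ n).1 (pos G σ τ n).2

/-! ### The state digraph and its labelling -/

/-- The initial labelling of the state digraph: final states get `0`, all others `∞`.
A state is a position together with a `Bool` which is `true` when the Pursuer is next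
to move. -/
noncomputable def labelInit (G : GCR PP PE) : (PP × PE) × Bool → ℕ∞ :=
  fun s => if G.F s.1.1 s.1.2 then 0 else ⊤

/-- One round of updates of the labelling procedure: a non-final Pursuer-to-move state
gets `1 +` the minimum label over its out-neighbours, and a non-final Evader-to-move
state gets `1 +` the maximum label over its out-neighbours. -/
noncomputable def labelStep (G : GCR PP PE) (f : (PP × PE) × Bool → ℕ∞) :
    (PP × PE) × Bool → ℕ∞ :=
  fun s =>
    if G.F s.1.1 s.1.2 then 0
    else if s.2 then 1 + ⨅ w ∈ G.AP s.1.1 s.1.2, f ((w, s.1.2), false)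
    else 1 + ⨆ x ∈ G.AE s.1.1 s.1.2, f ((s.1.1, x), true)

/-- The stable labelling of the state digraph, obtained by repeating the update
procedure until no label changes (the iterates decrease pointwise, so the stable
labelling is the pointwise infimum of the iterates). -/
noncomputable def label (G : GCR PP PE) (s : (PP × PE) × Bool) : ℕ∞ :=
  ⨅ n : ℕ, (G.labelStep)^[n] G.labelInit s

/-! ### Length of the game -/

/-- The number of moves the Pursuer makes before the position first lies in `F`, in the
play determined by `σ` and `τ` (the Pursuer moves at odd time-steps, so has made
`(n+1)/2` moves by time-step `n`); `⊤` if the position never lies in `F`. -/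
noncomputable def captureMoves (G : GCR PP PE) (σ : PStrat G) (τ : EStrat G) : ℕ∞ :=
  ⨅ (n : ℕ) (_ : G.F (pos G σ τ n).1 (pos G σ τ n).2), (((n + 1) / 2 : ℕ) : ℕ∞)

/-- The length of the game under optimal play: the minimum over valid Pursuer strategies
of the maximum over valid Evader strategies of the number of Pursuer moves made before
the position first lies in `F`. -/
noncomputable def gameLength (G : GCR PP PE) : ℕ∞ :=
  ⨅ (σ : PStrat G) (_ : σ.Valid), ⨆ (τ : EStrat G) (_ : τ.Valid), G.captureMoves σ τ

/-- The quantity `ℓ(p,q)` from Corollary 1. -/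
noncomputable def ell (G : GCR PP PE) (p : PP) (q : PE) : ℕ∞ :=
  if G.Rel q p then ⨅ (j : ℕ) (_ : G.rel j q p), (j : ℕ∞)
  else 1 + ⨆ w ∈ G.AP p q, ⨅ (j : ℕ) (_ : G.rel j q w), (j : ℕ∞)

/-! ### Position independent games -/

/-- A game is position independent (with position digraphs given by out-neighbour maps
`GP` and `GE`) if, from any non-final position, the allowed moves of the Pursuer depend
only on the Pursuer's position and the allowed moves of the Evader depend only on the
Evader's position. -/
def PositionIndependent (G : GCR PP PE) (GP : PP → Set PP) (GE : PE → Set PE) : Prop :=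
  ∀ p q, ¬ G.F p q → G.AP p q = GP p ∧ G.AE p q = GE q

/-- A vertex `(p,q)` of the round summary digraph is removable with respect to a set `S`
of vertices. -/
def Removable (G : GCR PP PE) (GP : PP → Set PP) (GE : PE → Set PE)
    (v : PP × PE) (S : Set (PP × PE)) : Prop :=
  G.F v.1 v.2 ∨ ∀ x ∈ GE v.2, G.F v.1 x ∨ ∃ y ∈ GP v.1, (y, x) ∈ S

/-- A removable vertex ordering of the round summary digraph: a sequence of vertices in
which each element is removable with respect to the set of vertices preceding it, and
there is a Pursuer start position `p ∈ I_P` such that for all `q ∈ I_E(p)` either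
`(p,q) ∈ F` or the Pursuer has an allowed move `w` with `(w,q)` in the sequence. -/
def RemovableOrdering (G : GCR PP PE) (GP : PP → Set PP) (GE : PE → Set PE)
    (L : List (PP × PE)) : Prop :=
  (∀ i : Fin L.length, G.Removable GP GE (L.get i)
      {w | ∃ j : Fin L.length, (j : ℕ) < (i : ℕ) ∧ L.get j = w}) ∧
  ∃ p, G.IP p ∧ ∀ q, G.IE p q → G.F p q ∨ ∃ w ∈ GP p, (w, q) ∈ L
/-!
The ordering condition is local: a non-final vertex `(p,q)` first enters `≼` at some level
`m + 1`, so each Evader reply `x` either is final or admits a Pursuer reply `w` with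
`x ≼_j w` for some `j ≤ m`, and such a `(w,x)` stands strictly earlier in the list.

The start condition comes from the Pursuer's winning strategy. Since `P_E` is finite, `≼`
is closed under the one-round rule defining `≼_i`, so from a position `(p,q)` with
`q ⋠ p` the Evader can always move to some `x` with `x ⋠ w` for every Pursuer reply `w`.
If the Pursuer's start `p` had an Evader answer `q` with every Pursuer reply outside `≼`,
an Evader playing these moves from `q` would never be caught.
-/

lemma rel_zero (G : GCR PP PE) (q : PE) (p : PP) : G.rel 0 q p ↔ G.F p q := by
  rw [rel]

lemma rel_succ_iff (G : GCR PP PE) (i : ℕ) (q : PE) (p : PP) :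
    G.rel (i + 1) q p ↔ (G.F p q ∨
      ∀ x ∈ G.AE p q, G.F p x ∨ ∃ w ∈ G.AP p x, ∃ j, ∃ _ : j < i + 1, G.rel j x w) := by
  rw [rel]

lemma rel_succ_of_rel (G : GCR PP PE) {i : ℕ} {q : PE} {p : PP} (h : G.rel i q p) :
    G.rel (i + 1) q p := by
  cases i with
  | zero => exact (G.rel_succ_iff 0 q p).2 (Or.inl ((G.rel_zero q p).1 h))
  | succ k =>
    rw [rel_succ_iff] at h ⊢
    refine h.imp_right fun h x hx => (h x hx).imp_right ?_
    rintro ⟨w, hw, j, hj, hr⟩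
    exact ⟨w, hw, j, by omega, hr⟩

lemma rel_monotone (G : GCR PP PE) (q : PE) (p : PP) : Monotone fun i => G.rel i q p :=
  monotone_nat_of_le_succ fun _ => G.rel_succ_of_rel

lemma Rel.of_final {G : GCR PP PE} {q : PE} {p : PP} (h : G.F p q) : G.Rel q p :=
  ⟨0, (G.rel_zero q p).2 h⟩

lemma Rel.eventually_rel {G : GCR PP PE} {q : PE} {p : PP} (h : G.Rel q p) :
    ∀ᶠ i in Filter.atTop, G.rel i q p := by
  obtain ⟨j, hj⟩ := h
  filter_upwards [Filter.eventually_ge_atTop j] with i hi using G.rel_monotone q p hi hj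

lemma rel_lt_of_rel_of_not_final {G : GCR PP PE} {m : ℕ} {q : PE} {p : PP} (h : G.rel m q p)
    (hF : ¬ G.F p q) : ∀ x ∈ G.AE p q, G.F p x ∨ ∃ w ∈ G.AP p x, ∃ j < m, G.rel j x w := by
  cases m with
  | zero => exact absurd ((G.rel_zero q p).1 h) hF
  | succ k =>
    intro x hx
    refine ((G.rel_succ_iff k q p).1 h |>.resolve_left hF x hx).imp_right ?_
    rintro ⟨w, hw, j, hj, hr⟩
    exact ⟨w, hw, j, hj, hr⟩

/-- The levels needed for the finitely many Evader replies have a common bound. -/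
lemma rel_of_forall_final_or_rel [Finite PE] {G : GCR PP PE} {q : PE} {p : PP}
    (h : ∀ x ∈ G.AE p q, G.F p x ∨ ∃ w ∈ G.AP p x, G.Rel x w) : G.Rel q p := by
  have hev : ∀ᶠ i in Filter.atTop, ∀ x, x ∈ G.AE p q → G.F p x ∨ ∃ w ∈ G.AP p x, G.rel i x w := by
    refine Filter.eventually_all.2 fun x => ?_
    by_cases hx : x ∈ G.AE p q ∧ ¬ G.F p x
    · obtain ⟨w, hw, hrel⟩ := (h x hx.1).resolve_left hx.2
      filter_upwards [hrel.eventually_rel] with i hi using fun _ => Or.inr ⟨w, hw, hi⟩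
    · exact Filter.Eventually.of_forall fun i hx' =>
        Or.inl (by simpa [hx'] using hx)
  obtain ⟨i, hi⟩ := hev.exists
  refine ⟨i + 1, (G.rel_succ_iff i q p).2 (Or.inr fun x hx => (hi x hx).imp_right ?_)⟩
  rintro ⟨w, hw, hr⟩
  exact ⟨w, hw, i, i.lt_succ_self, hr⟩

section Ordering

variable {G : GCR PP PE}

noncomputable def level (G : GCR PP PE) (v : PP × PE) : ℕ := sInf {n | G.rel n v.2 v.1}

lemma level_le {v : PP × PE} {n : ℕ} (h : G.rel n v.2 v.1) : G.level v ≤ n :=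
  Nat.sInf_le h

lemma rel_level {v : PP × PE} (h : G.Rel v.2 v.1) : G.rel (G.level v) v.2 v.1 :=
  Nat.sInf_mem h

lemma removable_get_of_sorted {GP : PP → Set PP} {GE : PE → Set PE}
    (hPI : G.PositionIndependent GP GE) {L : List (PP × PE)}
    (hmem : ∀ v : PP × PE, v ∈ L ↔ G.Rel v.2 v.1)
    (hsorted : ∀ i j : Fin L.length, (i : ℕ) ≤ j → G.level (L.get i) ≤ G.level (L.get j))
    (i : Fin L.length) :
    G.Removable GP GE (L.get i) {w | ∃ j : Fin L.length, (j : ℕ) < i ∧ L.get j = w} := by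
  set v := L.get i
  by_cases hF : G.F v.1 v.2
  · exact Or.inl hF
  refine Or.inr fun x hx => ?_
  rw [← (hPI _ _ hF).2] at hx
  by_cases hFx : G.F v.1 x
  · exact Or.inl hFx
  obtain ⟨w, hw, j, hj, hr⟩ :=
    (rel_lt_of_rel_of_not_final (G.rel_level ((hmem v).1 (L.get_mem i))) hF x hx).resolve_left hFx
  obtain ⟨k, hk⟩ := List.mem_iff_get.1 ((hmem (w, x)).2 ⟨j, hr⟩)
  have hlevel : G.level (L.get k) < G.level v := by
    rw [hk]
    exact (level_le (v := (w, x)) hr).trans_lt hj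
  refine Or.inr ⟨w, (hPI _ _ hFx).1 ▸ hw, k, ?_, hk⟩
  by_contra! hle
  exact (hsorted i k hle).not_gt hlevel

end Ordering

section Play

variable {G : GCR PP PE} (σ : PStrat G) (τ : EStrat G)

lemma play_snd (n : ℕ) : ∃ t, (G.play σ τ n).2 = G.pos σ τ n :: t := by
  cases n <;> exact ⟨_, rfl⟩

lemma pos_succ_of_even {n : ℕ} (hn : n % 2 = 0) :
    G.pos σ τ (n + 1) = (σ.move (G.play σ τ n).2, (G.pos σ τ n).2) := by
  simp [pos, play, hn]

lemma pos_succ_of_odd {n : ℕ} (hn : n % 2 = 1) :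
    G.pos σ τ (n + 1) = ((G.pos σ τ n).1, τ.move (G.play σ τ n).2) := by
  simp [pos, play, hn]

end Play

section Escape

variable {G : GCR PP PE}

/-- A non-final position, with the Pursuer to move, from which no Pursuer move reaches `≼`. -/
def EvaderSafe (G : GCR PP PE) (c : PP × PE) : Prop :=
  ¬ G.F c.1 c.2 ∧ ∀ w ∈ G.AP c.1 c.2, ¬ G.Rel c.2 w

lemma exists_evaderSafe_of_not_rel [Finite PE] {q : PE} {p : PP} (h : ¬ G.Rel q p) :
    ∃ x ∈ G.AE p q, G.EvaderSafe (p, x) := by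
  by_contra! hsafe
  refine h (rel_of_forall_final_or_rel fun x hx => ?_)
  have := hsafe x hx
  simp only [EvaderSafe, not_and, not_forall, not_not] at this
  tauto

noncomputable def escapeMove (G : GCR PP PE) (c : PP × PE) : PE :=
  if h : ∃ x ∈ G.AE c.1 c.2, G.EvaderSafe (c.1, x) then h.choose
  else if h' : (G.AE c.1 c.2).Nonempty then h'.some else c.2

lemma escapeMove_mem {c : PP × PE} (hc : ¬ G.F c.1 c.2) : G.escapeMove c ∈ G.AE c.1 c.2 := by
  unfold escapeMove
  split_ifs with h h'
  · exact h.choose_spec.1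
  · exact h'.some_mem
  · exact absurd (G.AE_nonempty _ _ hc) h'

lemma evaderSafe_escapeMove [Finite PE] {c : PP × PE} (hc : ¬ G.Rel c.2 c.1) :
    G.EvaderSafe (c.1, G.escapeMove c) := by
  have h := exists_evaderSafe_of_not_rel hc
  rw [escapeMove, dif_pos h]
  exact h.choose_spec.2

noncomputable def escapeStrat (G : GCR PP PE) (q₀ : PE) : EStrat G where
  init p := if G.I p q₀ then q₀ else if h : G.IP p then h.choose else q₀
  move l := (l.head?.map G.escapeMove).getD q₀

lemma escapeStrat_valid (q₀ : PE) : (G.escapeStrat q₀).Valid := by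
  refine ⟨fun p hp => ?_, fun _ c hc => escapeMove_mem hc⟩
  change G.I p (if G.I p q₀ then q₀ else if h : G.IP p then h.choose else q₀)
  split_ifs with h
  exacts [h, hp.choose_spec]

lemma not_rel_pos_succ {σ : PStrat G} {τ : EStrat G} (hσ : σ.MovesValid) {n : ℕ}
    (hn : n % 2 = 0) (h : G.EvaderSafe (G.pos σ τ n)) :
    ¬ G.Rel (G.pos σ τ (n + 1)).2 (G.pos σ τ (n + 1)).1 := by
  obtain ⟨t, ht⟩ := play_snd σ τ n
  rw [pos_succ_of_even σ τ hn]
  exact h.2 _ (ht ▸ hσ t _ h.1)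

lemma evaderSafe_pos_escapeStrat [Finite PE] {σ : PStrat G} (hσ : σ.MovesValid) {q₀ : PE}
    (hI : G.I σ.init q₀) (hsafe : G.EvaderSafe (σ.init, q₀)) (k : ℕ) :
    G.EvaderSafe (G.pos σ (G.escapeStrat q₀) (2 * k)) := by
  induction k with
  | zero => simpa [pos, play, escapeStrat, hI] using hsafe
  | succ k ih =>
    have hrel := not_rel_pos_succ hσ (by omega) ih
    obtain ⟨t, ht⟩ := play_snd σ (G.escapeStrat q₀) (2 * k + 1)
    rw [show 2 * (k + 1) = 2 * k + 1 + 1 by ring, pos_succ_of_odd σ _ (by omega), ht]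
    exact evaderSafe_escapeMove hrel

lemma not_final_pos_escapeStrat [Finite PE] {σ : PStrat G} (hσ : σ.MovesValid) {q₀ : PE}
    (hI : G.I σ.init q₀) (hsafe : G.EvaderSafe (σ.init, q₀)) (n : ℕ) :
    ¬ G.F (G.pos σ (G.escapeStrat q₀) n).1 (G.pos σ (G.escapeStrat q₀) n).2 := by
  have hsafe_even := evaderSafe_pos_escapeStrat hσ hI hsafe
  obtain ⟨k, rfl | rfl⟩ := n.even_or_odd'
  · exact (hsafe_even k).1
  · exact fun hF => not_rel_pos_succ hσ (by omega) (hsafe_even k) (Rel.of_final hF)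

lemma exists_start_of_pursuerWins [Finite PE] (hwin : G.PursuerWins) :
    ∃ p, G.IP p ∧ ∀ q, G.IE p q → G.F p q ∨ ∃ w ∈ G.AP p q, G.Rel q w := by
  obtain ⟨σ, ⟨hinit, hmoves⟩, hwinσ⟩ := hwin
  refine ⟨σ.init, hinit, fun q hq => ?_⟩
  by_contra! h
  obtain ⟨n, hn⟩ := hwinσ _ (escapeStrat_valid q)
  exact not_final_pos_escapeStrat hmoves hq h n hn

end Escape

theorem removableOrdering_of_pursuerWins_general [Fintype PE] (G : GCR PP PE)
    (GP : PP → Set PP) (GE : PE → Set PE) (hPI : G.PositionIndependent GP GE)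
    (hwin : G.PursuerWins) (L : List (PP × PE))
    (hmem : ∀ v : PP × PE, v ∈ L ↔ G.Rel v.2 v.1)
    (hsorted : ∀ i j : Fin L.length, (i : ℕ) ≤ (j : ℕ) →
      sInf {n : ℕ | G.rel n (L.get i).2 (L.get i).1} ≤
        sInf {n : ℕ | G.rel n (L.get j).2 (L.get j).1}) :
    G.RemovableOrdering GP GE L := by
  refine ⟨removable_get_of_sorted hPI hmem hsorted, ?_⟩
  obtain ⟨p, hp, hstart⟩ := exists_start_of_pursuerWins hwin
  refine ⟨p, hp, fun q hq => ?_⟩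
  by_cases hF : G.F p q
  · exact Or.inl hF
  obtain ⟨w, hw, hrel⟩ := (hstart q hq).resolve_left hF
  exact Or.inr ⟨w, (hPI p q hF).1 ▸ hw, (hmem (w, q)).2 hrel⟩

/-- If the Pursuer has a winning strategy in a position independent game, then listing
the vertices `(p,q)` of the round summary digraph with `q ≼ p` so that the pairs in
`≼_0` come first, followed by those in `≼_1 \ ≼_0`, then those in `≼_2 \ ≼_1`, and so
on (i.e. in order of nondecreasing least index), yields a removable vertex ordering. -/
theorem removableOrdering_of_pursuerWins [Fintype PP] [Fintype PE] (G : GCR PP PE)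
    (GP : PP → Set PP) (GE : PE → Set PE) (hPI : G.PositionIndependent GP GE)
    (hwin : G.PursuerWins) (L : List (PP × PE)) (hnodup : L.Nodup)
    (hmem : ∀ v : PP × PE, v ∈ L ↔ G.Rel v.2 v.1)
    (hsorted : ∀ i j : Fin L.length, (i : ℕ) ≤ (j : ℕ) →
      sInf {n : ℕ | G.rel n (L.get i).2 (L.get i).1} ≤
        sInf {n : ℕ | G.rel n (L.get j).2 (L.get j).1}) :
    G.RemovableOrdering GP GE L :=
  removableOrdering_of_pursuerWins_general G GP GE hPI hwin L hmem hsorted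

end GCR
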